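/- For p ∈ (0,1), q = 1-p, and s ∈ (0,1), the quantity (q/p)^s · (∑_{k ≥ 1} k^s p^k q + ∑_{k ≥ 1} k^{-s} q^k p) is bounded above by p^{1-s} + Γ(1-s) q^{1+s}, which in turn is at most 2·max(1, Γ(1-s)), a constant independent of p. -/

import Mathlib

/-!
Write `q = 1 - p`. For the first series, Hölder's inequality with exponents `1/s` and `1/(1-s)`
applied to `k^s p^k = (k p^k)^s (p^k)^(1-s)` over `k ≥ 1` gives
`∑ k^s p^k ≤ (p/q²)^s (p/q)^(1-s) = p q^(-(1+s))`.

For the second, `(k+1)^(-s) Γ(s) = ∫₀^∞ t^(s-1) e^(-(k+1)t) dt`. Summing the geometric series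
under the integral gives `q e^(-t) / (1 - q e^(-t)) ≤ q / (p + t)`, because `e^t ≥ 1 + t`, and
`∫₀^∞ t^(s-1) / (p + t) dt = Γ(s) Γ(1-s) p^(s-1)` follows from `1/(p+t) = ∫₀^∞ e^(-(p+t)u) du`
and Tonelli. These integrals are taken in `ℝ≥0∞`, so interchanging sums and integrals needs no
integrability side conditions.
-/

open Real MeasureTheory Set

theorem summable_and_tsum_rpow_mul_rpow_le {ι : Type*} {a b : ι → ℝ} {s : ℝ} (hs0 : 0 < s)
    (hs1 : s < 1) (ha : ∀ i, 0 ≤ a i) (hb : ∀ i, 0 ≤ b i) (ha_sum : Summable a)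
    (hb_sum : Summable b) :
    (Summable fun i => a i ^ s * b i ^ (1 - s)) ∧
      ∑' i, a i ^ s * b i ^ (1 - s) ≤ (∑' i, a i) ^ s * (∑' i, b i) ^ (1 - s) := by
  have ha' : ∀ i, (a i ^ s) ^ s⁻¹ = a i := fun i => rpow_rpow_inv (ha i) hs0.ne'
  have hb' : ∀ i, (b i ^ (1 - s)) ^ (1 - s)⁻¹ = b i :=
    fun i => rpow_rpow_inv (hb i) (sub_ne_zero.2 hs1.ne')
  have := summable_and_inner_le_Lp_mul_Lq_tsum_of_nonneg
    (HolderConjugate.inv_one_sub_inv hs0 hs1) (fun i => rpow_nonneg (ha i) s)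
    (fun i => rpow_nonneg (hb i) (1 - s)) (by simpa only [ha'] using ha_sum)
    (by simpa only [hb'] using hb_sum)
  simpa only [ha', hb', one_div, inv_inv] using this

theorem tsum_rpow_mul_geometric_le {p s : ℝ} (hp0 : 0 < p) (hp1 : p < 1) (hs0 : 0 < s)
    (hs1 : s < 1) : ∑' k : ℕ, (k : ℝ) ^ s * p ^ k ≤ p * (1 - p) ^ (-(1 + s)) := by
  have hq : 0 < 1 - p := sub_pos.2 hp1
  have hnorm : ‖p‖ < 1 := by rwa [norm_of_nonneg hp0.le]
  have hmul : Summable fun k : ℕ => (k : ℝ) * p ^ k := by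
    simpa using summable_pow_mul_geometric_of_norm_lt_one 1 hnorm
  have hmul_succ : Summable fun k : ℕ => ((k + 1 : ℕ) : ℝ) * p ^ (k + 1) :=
    (summable_nat_add_iff 1).2 hmul
  have hgeom_succ : Summable fun k : ℕ => p ^ (k + 1) :=
    (summable_nat_add_iff 1).2 (summable_geometric_of_lt_one hp0.le hp1)
  have hsplit : ∀ k : ℕ, (((k + 1 : ℕ) : ℝ) * p ^ (k + 1)) ^ s * (p ^ (k + 1)) ^ (1 - s) =
      ((k + 1 : ℕ) : ℝ) ^ s * p ^ (k + 1) := by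
    intro k
    rw [mul_rpow (by positivity) (by positivity), mul_assoc, ← rpow_add (by positivity),
      add_sub_cancel, rpow_one]
  obtain ⟨hsum, hle⟩ := summable_and_tsum_rpow_mul_rpow_le hs0 hs1 (fun k => by positivity)
    (fun k => by positivity) hmul_succ hgeom_succ
  simp only [hsplit] at hsum hle
  have hA : ∑' k : ℕ, ((k + 1 : ℕ) : ℝ) * p ^ (k + 1) = p / (1 - p) ^ 2 := by
    have := tsum_coe_mul_geometric_of_norm_lt_one hnorm
    rw [hmul.tsum_eq_zero_add] at this
    simpa using this
  have hB : ∑' k : ℕ, p ^ (k + 1) = p / (1 - p) := by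
    simp only [pow_succ', tsum_mul_left, tsum_geometric_of_lt_one hp0.le hp1, div_eq_mul_inv]
  calc ∑' k : ℕ, (k : ℝ) ^ s * p ^ k = ∑' k : ℕ, ((k + 1 : ℕ) : ℝ) ^ s * p ^ (k + 1) := by
        rw [tsum_eq_zero_add' (f := fun k : ℕ => (k : ℝ) ^ s * p ^ k) hsum]; simp [hs0.ne']
    _ ≤ (p / (1 - p) ^ 2) ^ s * (p / (1 - p)) ^ (1 - s) := by rwa [hA, hB] at hle
    _ = p * (1 - p) ^ (-(1 + s)) := by
        rw [div_rpow hp0.le (by positivity), div_rpow hp0.le hq.le, div_mul_div_comm,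
          ← rpow_add hp0, add_sub_cancel, rpow_one, ← rpow_natCast, ← rpow_mul hq.le,
          ← rpow_add hq, rpow_neg hq.le, div_eq_mul_inv]
        ring_nf

theorem lintegral_rpow_mul_exp_neg_mul_Ioi {a r : ℝ} (ha : 0 < a) (hr : 0 < r) :
    ∫⁻ t in Ioi (0 : ℝ), ENNReal.ofReal (t ^ (a - 1) * exp (-(r * t))) =
      ENNReal.ofReal (r ^ (-a) * Gamma a) := by
  have hint : IntegrableOn (fun t : ℝ => t ^ (a - 1) * exp (-(r * t))) (Ioi 0) := by
    simpa only [rpow_one, neg_mul] using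
      integrableOn_rpow_mul_exp_neg_mul_rpow (by linarith) one_pos hr
  rw [← ofReal_integral_eq_lintegral_ofReal hint, rpow_neg hr.le, ← inv_rpow hr.le, ← one_div,
    ← integral_rpow_mul_exp_neg_mul_Ioi ha hr]
  filter_upwards [ae_restrict_mem measurableSet_Ioi] with t (ht : 0 < t)
  exact mul_nonneg (rpow_nonneg ht.le _) (exp_pos _).le

theorem ofReal_inv_eq_lintegral_exp_neg_mul_Ioi {r : ℝ} (hr : 0 < r) :
    ENNReal.ofReal r⁻¹ = ∫⁻ u in Ioi (0 : ℝ), ENNReal.ofReal (exp (-(r * u))) := by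
  simpa [← rpow_neg_one] using (lintegral_rpow_mul_exp_neg_mul_Ioi one_pos hr).symm

theorem lintegral_rpow_div_add_Ioi {s p : ℝ} (hs0 : 0 < s) (hs1 : s < 1) (hp : 0 < p) :
    ∫⁻ t in Ioi (0 : ℝ), ENNReal.ofReal (t ^ (s - 1) / (p + t)) =
      ENNReal.ofReal (Gamma s * Gamma (1 - s) * p ^ (s - 1)) := by
  have hmeas : Measurable (Function.uncurry fun t u : ℝ =>
      ENNReal.ofReal (t ^ (s - 1) * exp (-((p + t) * u)))) := by
    unfold Function.uncurry; fun_prop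
  calc ∫⁻ t in Ioi (0 : ℝ), ENNReal.ofReal (t ^ (s - 1) / (p + t))
      = ∫⁻ t in Ioi (0 : ℝ), ∫⁻ u in Ioi (0 : ℝ),
          ENNReal.ofReal (t ^ (s - 1) * exp (-((p + t) * u))) := by
        refine setLIntegral_congr_fun measurableSet_Ioi fun t (ht : 0 < t) => ?_
        simp only [ENNReal.ofReal_mul (rpow_nonneg ht.le _)]
        rw [lintegral_const_mul _ (by fun_prop), ← ofReal_inv_eq_lintegral_exp_neg_mul_Ioi
          (by linarith), ← ENNReal.ofReal_mul (by positivity), div_eq_mul_inv]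
    _ = ∫⁻ u in Ioi (0 : ℝ), ∫⁻ t in Ioi (0 : ℝ),
          ENNReal.ofReal (t ^ (s - 1) * exp (-((p + t) * u))) :=
        lintegral_lintegral_swap hmeas.aemeasurable
    _ = ∫⁻ u in Ioi (0 : ℝ), ENNReal.ofReal (Gamma s) *
          ENNReal.ofReal (u ^ ((1 - s) - 1) * exp (-(p * u))) := by
        refine setLIntegral_congr_fun measurableSet_Ioi fun u (hu : 0 < u) => ?_
        have hsplit : ∀ t : ℝ, t ^ (s - 1) * exp (-((p + t) * u)) =
            exp (-(p * u)) * (t ^ (s - 1) * exp (-(u * t))) := fun t => by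
          rw [show -((p + t) * u) = -(p * u) + -(u * t) by ring, exp_add]; ring
        simp only [hsplit, ENNReal.ofReal_mul (exp_pos _).le]
        rw [lintegral_const_mul _ (by fun_prop), lintegral_rpow_mul_exp_neg_mul_Ioi hs0 hu,
          ← ENNReal.ofReal_mul (exp_pos _).le, ← ENNReal.ofReal_mul (Gamma_pos_of_pos hs0).le]
        congr 1
        rw [sub_sub_cancel_left]; ring
    _ = ENNReal.ofReal (Gamma s * Gamma (1 - s) * p ^ (s - 1)) := by
        rw [lintegral_const_mul _ (by fun_prop), lintegral_rpow_mul_exp_neg_mul_Ioi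
          (by linarith) hp, ← ENNReal.ofReal_mul (Gamma_pos_of_pos hs0).le, neg_sub]
        ring_nf

theorem tsum_ofReal_mul_exp_neg_pow_succ_le {q t : ℝ} (hq0 : 0 ≤ q) (hq1 : q ≤ 1) (ht : 0 < t) :
    ∑' k : ℕ, ENNReal.ofReal ((q * exp (-t)) ^ (k + 1)) ≤ ENNReal.ofReal (q / (1 - q + t)) := by
  set x := q * exp (-t)
  have hx0 : 0 ≤ x := by positivity
  have hexp : exp (-t) * (1 + t) ≤ 1 := by
    rw [exp_neg, inv_mul_le_iff₀ (exp_pos t)]; linarith [add_one_le_exp t]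
  have hx1 : x < 1 := by
    have := exp_lt_one_iff.2 (neg_lt_zero.2 ht)
    nlinarith
  have hgeom : HasSum (fun k : ℕ => x ^ (k + 1)) (x / (1 - x)) := by
    simpa only [pow_succ', div_eq_mul_inv] using (hasSum_geometric_of_lt_one hx0 hx1).mul_left x
  rw [← ENNReal.ofReal_tsum_of_nonneg (fun k => by positivity) hgeom.summable, hgeom.tsum_eq]
  refine ENNReal.ofReal_le_ofReal ?_
  rw [div_le_div_iff₀ (by linarith) (by linarith)]
  nlinarith

theorem tsum_ofReal_rpow_neg_mul_pow_mul_Gamma_le {p s : ℝ} (hp0 : 0 < p) (hp1 : p ≤ 1)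
    (hs0 : 0 < s) (hs1 : s < 1) :
    ∑' k : ℕ, ENNReal.ofReal (((k : ℝ) + 1) ^ (-s) * (1 - p) ^ (k + 1) * Gamma s) ≤
      ENNReal.ofReal (Gamma (1 - s) * (1 - p) * p ^ (s - 1) * Gamma s) := by
  set q := 1 - p with hq
  have hq0 : 0 ≤ q := by linarith
  calc ∑' k : ℕ, ENNReal.ofReal (((k : ℝ) + 1) ^ (-s) * q ^ (k + 1) * Gamma s)
      = ∑' k : ℕ, ∫⁻ t in Ioi (0 : ℝ),
          ENNReal.ofReal (t ^ (s - 1)) * ENNReal.ofReal ((q * exp (-t)) ^ (k + 1)) := by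
        refine tsum_congr fun k => ?_
        rw [mul_right_comm, ENNReal.ofReal_mul' (by positivity),
          ← lintegral_rpow_mul_exp_neg_mul_Ioi hs0 (by positivity),
          ← lintegral_mul_const _ (by fun_prop)]
        refine setLIntegral_congr_fun measurableSet_Ioi fun t (ht : 0 < t) => ?_
        rw [← ENNReal.ofReal_mul (by positivity), ← ENNReal.ofReal_mul (by positivity),
          mul_assoc, mul_pow, ← exp_nat_mul]
        push_cast
        ring_nf
    _ = ∫⁻ t in Ioi (0 : ℝ), ENNReal.ofReal (t ^ (s - 1)) *
          ∑' k : ℕ, ENNReal.ofReal ((q * exp (-t)) ^ (k + 1)) := by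
        rw [← lintegral_tsum fun k => by fun_prop]
        simp only [ENNReal.tsum_mul_left]
    _ ≤ ∫⁻ t in Ioi (0 : ℝ), ENNReal.ofReal q * ENNReal.ofReal (t ^ (s - 1) / (p + t)) := by
        refine setLIntegral_mono' measurableSet_Ioi fun t (ht : 0 < t) => ?_
        calc ENNReal.ofReal (t ^ (s - 1)) * ∑' k : ℕ, ENNReal.ofReal ((q * exp (-t)) ^ (k + 1))
            ≤ ENNReal.ofReal (t ^ (s - 1)) * ENNReal.ofReal (q / (1 - q + t)) := by
              gcongr; exact tsum_ofReal_mul_exp_neg_pow_succ_le hq0 (by linarith) ht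
          _ = ENNReal.ofReal q * ENNReal.ofReal (t ^ (s - 1) / (p + t)) := by
              rw [← ENNReal.ofReal_mul (by positivity), ← ENNReal.ofReal_mul hq0, hq,
                sub_sub_cancel]
              ring_nf
    _ = ENNReal.ofReal (Gamma (1 - s) * q * p ^ (s - 1) * Gamma s) := by
        rw [lintegral_const_mul _ (by fun_prop), lintegral_rpow_div_add_Ioi hs0 hs1 hp0,
          ← ENNReal.ofReal_mul hq0]
        ring_nf

theorem tsum_rpow_neg_mul_pow_le {p s : ℝ} (hp0 : 0 < p) (hp1 : p ≤ 1) (hs0 : 0 < s)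
    (hs1 : s < 1) :
    ∑' k : ℕ, ((k : ℝ) + 1) ^ (-s) * (1 - p) ^ (k + 1) ≤
      Gamma (1 - s) * (1 - p) * p ^ (s - 1) := by
  have hq0 : 0 ≤ 1 - p := by linarith
  have hGs : 0 < Gamma s := Gamma_pos_of_pos hs0
  have hsum : Summable fun k : ℕ => ((k : ℝ) + 1) ^ (-s) * (1 - p) ^ (k + 1) := by
    refine Summable.of_nonneg_of_le (fun k => by positivity) (fun k => ?_)
      ((summable_nat_add_iff 1).2 (summable_geometric_of_lt_one hq0 (by linarith)))
    exact mul_le_of_le_one_left (by positivity)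
      (rpow_le_one_of_one_le_of_nonpos (by linarith [k.cast_nonneg (α := ℝ)]) (by linarith))
  have hle := tsum_ofReal_rpow_neg_mul_pow_mul_Gamma_le hp0 hp1 hs0 hs1
  rw [← ENNReal.ofReal_tsum_of_nonneg (fun k => by positivity) (hsum.mul_right _),
    ENNReal.ofReal_le_ofReal_iff (by positivity), tsum_mul_right] at hle
  exact le_of_mul_le_mul_right hle hGs

/-- For `p ∈ (0,1)`, `q = 1-p`, `s ∈ (0,1)`, the quantity
`(q/p)^s ⬝ (∑_{k≥1} k^s p^k q + ∑_{k≥1} k^{-s} q^k p)` is at most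
`p^{1-s} + Γ(1-s) q^{1+s}`, which is at most `2·max(1, Γ(1-s))`. -/
theorem biased_ratio_moment_bound (p s : ℝ) (hp0 : 0 < p) (hp1 : p < 1)
    (hs0 : 0 < s) (hs1 : s < 1) :
    ((1 - p) / p) ^ s *
        ((∑' k : ℕ, (k : ℝ) ^ s * p ^ k * (1 - p)) +
          (∑' k : ℕ, ((k : ℝ) + 1) ^ (-s) * (1 - p) ^ (k + 1) * p)) ≤
      p ^ (1 - s) + Real.Gamma (1 - s) * (1 - p) ^ (1 + s) ∧
    p ^ (1 - s) + Real.Gamma (1 - s) * (1 - p) ^ (1 + s) ≤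
      2 * max 1 (Real.Gamma (1 - s)) := by
  have hq : 0 < 1 - p := sub_pos.2 hp1
  have hG : 0 < Gamma (1 - s) := Gamma_pos_of_pos (by linarith)
  refine ⟨?_, ?_⟩
  · rw [tsum_mul_right, tsum_mul_right]
    calc _ ≤ ((1 - p) / p) ^ s * (p * (1 - p) ^ (-(1 + s)) * (1 - p) +
          Gamma (1 - s) * (1 - p) * p ^ (s - 1) * p) := by
          gcongr
          · exact tsum_rpow_mul_geometric_le hp0 hp1 hs0 hs1
          · exact tsum_rpow_neg_mul_pow_le hp0 hp1.le hs0 hs1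
      _ = p ^ (1 - s) + Gamma (1 - s) * (1 - p) ^ (1 + s) := by
          rw [div_rpow hq.le hp0.le, rpow_neg hq.le, rpow_add hq, rpow_sub hp0,
            rpow_sub hp0]
          simp only [rpow_one]
          field_simp
  · have hp_pow : p ^ (1 - s) ≤ 1 := rpow_le_one hp0.le hp1.le (by linarith)
    have hq_pow : (1 - p) ^ (1 + s) ≤ 1 := rpow_le_one hq.le (by linarith) (by linarith)
    calc p ^ (1 - s) + Gamma (1 - s) * (1 - p) ^ (1 + s) ≤ 1 + Gamma (1 - s) :=
          add_le_add hp_pow (mul_le_of_le_one_right hG.le hq_pow)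
      _ ≤ 2 * max 1 (Gamma (1 - s)) := by
          linarith [le_max_left 1 (Gamma (1 - s)), le_max_right 1 (Gamma (1 - s))]
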